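/- arXiv:2205.00930 — 2 statements merged into one kernel-verified Lean document; each statement's English description precedes it below -/
import Mathlib

section
/- Let f be a probability density on ℝ symmetric about 0 (f(-z) = f(z)), and let w : ℝ → [0,∞) be an even weight function, weakly increasing on [0,∞), with w(0) = 0 and normalizing constant K = ∫ w f dz ∈ (0,∞). Define the non-local density f^{NL}(z) = w(z)f(z)/K with c.d.f. F^{NL}, and let F be the c.d.f. of f. Then F(z) ≥ F^{NL}(z) for all z ≥ 0, and F(z) ≤ F^{NL}(z) for all z ≤ 0. -/
/-! With `g = (w - K) f`, the definition of `K` and `∫ f = 1` give `∫ g = 0`, and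
`FNL z - F z = (∫_{x ≤ z} g) / K`. Since `g` is even, each half-line carries half of the
total mass, so `∫_{x > 0} g = 0`. On `[0, ∞)` the factor `w - K` is monotone, so `g` changes
sign at most once there, from `≤ 0` to `≥ 0`; hence every tail `∫_{x > z} g` with `z ≥ 0`
is nonnegative. For `z ≥ 0` this tail is `-∫_{x ≤ z} g`, and for `z ≤ 0` evenness turns
`∫_{x ≤ z} g` into the tail beyond `-z`. -/

open MeasureTheory Set

theorem setIntegral_Iic_eq_setIntegral_Ioi_neg_of_even {E : Type*} [NormedAddCommGroup E]
    [NormedSpace ℝ E] {g : ℝ → E} (hg : ∀ x, g (-x) = g x) (z : ℝ) :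
    ∫ x in Iic z, g x = ∫ x in Ioi (-z), g x := by
  simpa only [hg] using integral_comp_neg_Iic z g

theorem setIntegral_Ioi_zero_eq_zero_of_even {E : Type*} [NormedAddCommGroup E]
    [NormedSpace ℝ E] {g : ℝ → E} (hg : ∀ x, g (-x) = g x) (hint : Integrable g)
    (h0 : ∫ x, g x = 0) : ∫ x in Ioi 0, g x = 0 := by
  have hsplit := intervalIntegral.integral_Iic_add_Ioi (b := 0) hint.integrableOn hint.integrableOn
  rw [setIntegral_Iic_eq_setIntegral_Ioi_neg_of_even hg, neg_zero, h0, ← two_smul ℝ] at hsplit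
  exact (smul_eq_zero.mp hsplit).resolve_left two_ne_zero

theorem setIntegral_Ioi_mul_nonneg_of_monotoneOn {u f : ℝ → ℝ} {a z : ℝ}
    (hu : MonotoneOn u (Ici a)) (hf : ∀ x ∈ Ioi a, 0 ≤ f x)
    (hint : IntegrableOn (fun x => u x * f x) (Ioi a)) (h0 : 0 ≤ ∫ x in Ioi a, u x * f x)
    (hz : a ≤ z) : 0 ≤ ∫ x in Ioi z, u x * f x := by
  rcases le_or_gt 0 (u z) with huz | huz
  · refine setIntegral_nonneg measurableSet_Ioi fun x hx => mul_nonneg ?_ (hf x (hz.trans_lt hx))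
    exact huz.trans (hu hz (hz.trans hx.le) hx.le)
  · have hhead : ∫ x in Ioc a z, u x * f x ≤ 0 :=
      setIntegral_nonpos measurableSet_Ioc fun x hx =>
        mul_nonpos_of_nonpos_of_nonneg ((hu hx.1.le hz hx.2).trans huz.le) (hf x hx.1)
    have hsplit : (∫ x in Ioc a z, u x * f x) + ∫ x in Ioi z, u x * f x
        = ∫ x in Ioi a, u x * f x := by
      rw [← setIntegral_union (Ioc_disjoint_Ioi le_rfl) measurableSet_Ioi
        (hint.mono_set Ioc_subset_Ioi_self) (hint.mono_set (Ioi_subset_Ioi hz)),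
        Ioc_union_Ioi_eq_Ioi hz]
    linarith

theorem setIntegral_Iic_mul_sign_of_even_of_monotoneOn {u f : ℝ → ℝ}
    (hu_even : ∀ x, u (-x) = u x) (hu_mono : MonotoneOn u (Ici 0))
    (hf_even : ∀ x, f (-x) = f x) (hf_nonneg : ∀ x, 0 ≤ f x)
    (hint : Integrable (fun x => u x * f x)) (h0 : ∫ x, u x * f x = 0) :
    (∀ z ≥ (0:ℝ), ∫ x in Iic z, u x * f x ≤ 0) ∧ (∀ z ≤ (0:ℝ), 0 ≤ ∫ x in Iic z, u x * f x) := by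
  have hg_even : ∀ x, u (-x) * f (-x) = u x * f x := fun x => by rw [hu_even, hf_even]
  have htail : ∀ z ≥ (0:ℝ), 0 ≤ ∫ x in Ioi z, u x * f x := fun z hz =>
    setIntegral_Ioi_mul_nonneg_of_monotoneOn hu_mono (fun x _ => hf_nonneg x) hint.integrableOn
      (setIntegral_Ioi_zero_eq_zero_of_even hg_even hint h0).ge hz
  refine ⟨fun z hz => ?_, fun z hz => ?_⟩
  · have hsplit := intervalIntegral.integral_Iic_add_Ioi (b := z) hint.integrableOn
      hint.integrableOn
    linarith [htail z hz]
  · rw [setIntegral_Iic_eq_setIntegral_Ioi_neg_of_even hg_even]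
    exact htail (-z) (neg_nonneg.mpr hz)

theorem nonlocal_cdf_comparison_symmetric_general
    (f w : ℝ → ℝ)
    (hf_nonneg : ∀ z, 0 ≤ f z)
    (hf_int : Integrable f)
    (hf_one : ∫ z, f z = 1)
    (hf_symm : ∀ z, f (-z) = f z)
    (hw_even : ∀ z, w (-z) = w z)
    (hw_mono : MonotoneOn w (Ici (0:ℝ)))
    (hwf_int : Integrable (fun z => w z * f z))
    (K : ℝ) (hK : K = ∫ z, w z * f z) (hKpos : 0 < K)
    (F FNL : ℝ → ℝ)
    (hF : ∀ z, F z = ∫ x in Iic z, f x)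
    (hFNL : ∀ z, FNL z = ∫ x in Iic z, w x * f x / K) :
    (∀ z ≥ (0:ℝ), FNL z ≤ F z) ∧ (∀ z ≤ (0:ℝ), F z ≤ FNL z) := by
  have hg_eq : (fun x => (w x - K) * f x) = fun x => w x * f x - K * f x := by
    funext x; ring
  have hg_int : Integrable (fun x => (w x - K) * f x) := by
    rw [hg_eq]; exact hwf_int.sub (hf_int.const_mul K)
  have hg_total : ∫ x, (w x - K) * f x = 0 := by
    rw [hg_eq, integral_sub hwf_int (hf_int.const_mul K), integral_const_mul, hf_one, ← hK,
      mul_one, sub_self]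
  have hdiff : ∀ z, FNL z - F z = (∫ x in Iic z, (w x - K) * f x) / K := fun z => by
    rw [hFNL, hF, integral_div, hg_eq, integral_sub hwf_int.integrableOn
      (hf_int.const_mul K).integrableOn, integral_const_mul]
    field_simp
  obtain ⟨hright, hleft⟩ := setIntegral_Iic_mul_sign_of_even_of_monotoneOn
    (fun x => by rw [hw_even]) (fun x hx y hy hxy => sub_le_sub_right (hw_mono hx hy hxy) K)
    hf_symm hf_nonneg hg_int hg_total
  refine ⟨fun z hz => ?_, fun z hz => ?_⟩
  · linarith [hdiff z, div_nonpos_of_nonpos_of_nonneg (hright z hz) hKpos.le]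
  · linarith [hdiff z, div_nonneg (hleft z hz) hKpos.le]

/-- For a symmetric density `f` and a proper weight `w` (even, `w 0 = 0`, weakly
increasing on `[0,∞)`), the c.d.f. of the non-local density `w f / K` is below the
c.d.f. of `f` on `[0,∞)` and above it on `(-∞,0]`. -/
theorem nonlocal_cdf_comparison_symmetric
    (f w : ℝ → ℝ)
    (hf_nonneg : ∀ z, 0 ≤ f z)
    (hf_int : Integrable f)
    (hf_one : ∫ z, f z = 1)
    (hf_symm : ∀ z, f (-z) = f z)
    (hw_nonneg : ∀ z, 0 ≤ w z)
    (hw_even : ∀ z, w (-z) = w z)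
    (hw_zero : w 0 = 0)
    (hw_mono : MonotoneOn w (Ici (0:ℝ)))
    (hwf_int : Integrable (fun z => w z * f z))
    (K : ℝ) (hK : K = ∫ z, w z * f z) (hKpos : 0 < K)
    (F FNL : ℝ → ℝ)
    (hF : ∀ z, F z = ∫ x in Iic z, f x)
    (hFNL : ∀ z, FNL z = ∫ x in Iic z, w x * f x / K) :
    (∀ z ≥ (0:ℝ), FNL z ≤ F z) ∧ (∀ z ≤ (0:ℝ), F z ≤ FNL z) :=
  nonlocal_cdf_comparison_symmetric_general f w hf_nonneg hf_int hf_one hf_symm hw_even hw_mono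
    hwf_int K hK hKpos F FNL hF hFNL
end

section
/- Under the hypotheses of the previous setup (w proper weight, f₁ a density, K its normalizing constant, g = 1 - w/K, H(z) = ∫_{-∞}^z g f₁), let S = {z : w(z) ≤ K} and suppose S ⊆ A = [z̲, z̄]. Then H(z̄) ≥ 0 and H(z̲) ≤ 0, hence F₁(z̄) - F₁^{NL}(z̄) + F₁^{NL}(z̲) - F₁(z̲) ≥ 0 (Proposition 2's key inequality). -/
/-!
Since `K = ∫ w f₁` and `∫ f₁ = 1`, the function `g f₁ = (1 - w / K) f₁` has total integral
zero, and `F₁ - F₁^{NL} = H`. Outside `S`, hence outside `A = [z̲, z̄]`, we have `w > K`, so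
`g f₁ ≤ 0` there. Thus `H(z̲)` integrates a nonpositive function, while `H(z̄)` is minus the
integral of a nonpositive function over `(z̄, ∞)`.
-/

open MeasureTheory Set

theorem integral_one_sub_div_mul {α : Type*} [MeasurableSpace α] {μ : Measure α}
    {f w : α → ℝ} (hf : Integrable f μ) (hwf : Integrable (fun x => w x * f x) μ) (K : ℝ) :
    ∫ x, (1 - w x / K) * f x ∂μ = ∫ x, f x ∂μ - ∫ x, w x * f x / K ∂μ := by
  rw [← integral_sub hf (hwf.div_const K)]
  congr 1 with x
  ring

theorem integral_Iic_nonneg_of_integral_eq_zero {φ : ℝ → ℝ} (hφ : Integrable φ)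
    (hφ_zero : ∫ x, φ x = 0) {a : ℝ} (hφ_nonpos : ∀ x, a < x → φ x ≤ 0) :
    0 ≤ ∫ x in Iic a, φ x := by
  have hsplit := intervalIntegral.integral_Iic_add_Ioi (b := a) hφ.integrableOn hφ.integrableOn
  have htail : ∫ x in Ioi a, φ x ≤ 0 := setIntegral_nonpos measurableSet_Ioi hφ_nonpos
  linarith

theorem integral_Iic_nonpos_of_nonpos_on_Iio {φ : ℝ → ℝ} {a : ℝ}
    (hφ_nonpos : ∀ x, x < a → φ x ≤ 0) : ∫ x in Iic a, φ x ≤ 0 := by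
  rw [integral_Iic_eq_integral_Iio]
  exact setIntegral_nonpos measurableSet_Iio hφ_nonpos

theorem proposition_two_key_inequality_general
    (f₁ w : ℝ → ℝ)
    (hf_nonneg : ∀ z, 0 ≤ f₁ z)
    (hf_int : Integrable f₁)
    (hf_one : ∫ z, f₁ z = 1)
    (hwf_int : Integrable (fun z => w z * f₁ z))
    (K : ℝ) (hK : K = ∫ z, w z * f₁ z) (hKpos : 0 < K)
    (g : ℝ → ℝ) (hg : ∀ z, g z = 1 - w z / K)
    (H : ℝ → ℝ) (hH : ∀ z, H z = ∫ x in Iic z, g x * f₁ x)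
    (F₁ F₁NL : ℝ → ℝ)
    (hF₁ : ∀ z, F₁ z = ∫ x in Iic z, f₁ x)
    (hF₁NL : ∀ z, F₁NL z = ∫ x in Iic z, w x * f₁ x / K)
    (zl zu : ℝ)
    (hS : {z : ℝ | w z ≤ K} ⊆ Icc zl zu) :
    0 ≤ H zu ∧ H zl ≤ 0 ∧ F₁ zu - F₁NL zu + F₁NL zl - F₁ zl ≥ 0 := by
  obtain rfl : g = fun z => 1 - w z / K := funext hg
  have hgf_int : Integrable fun z => (1 - w z / K) * f₁ z :=
    (hf_int.sub (hwf_int.div_const K)).congr (.of_forall fun z => by simp only [Pi.sub_apply]; ring)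
  have hgf_zero : ∫ z, (1 - w z / K) * f₁ z = 0 := by
    rw [integral_one_sub_div_mul hf_int hwf_int, integral_div, ← hK, hf_one,
      div_self hKpos.ne', sub_self]
  have hgf_nonpos : ∀ z, z ∉ Icc zl zu → (1 - w z / K) * f₁ z ≤ 0 := fun z hz => by
    have hKw : K ≤ w z := le_of_lt (not_le.mp (mt (@hS z) hz))
    have : 1 ≤ w z / K := (one_le_div hKpos).mpr hKw
    exact mul_nonpos_of_nonpos_of_nonneg (by linarith) (hf_nonneg z)
  have hHu : 0 ≤ H zu := hH zu ▸ integral_Iic_nonneg_of_integral_eq_zero hgf_int hgf_zero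
    fun x hx => hgf_nonpos x fun h => (not_le.mpr hx) h.2
  have hHl : H zl ≤ 0 := hH zl ▸ integral_Iic_nonpos_of_nonpos_on_Iio
    fun x hx => hgf_nonpos x fun h => (not_le.mpr hx) h.1
  have hF_sub : ∀ z, F₁ z - F₁NL z = H z := fun z => by
    rw [hF₁, hF₁NL, hH, integral_one_sub_div_mul hf_int.integrableOn hwf_int.integrableOn]
  refine ⟨hHu, hHl, ?_⟩
  linarith [hF_sub zu, hF_sub zl]

/-- Proposition 2's key inequality: if the sublevel set `S = {z : w z ≤ K}` is contained
in the acceptance region `A = [z̲, z̄]`, then `H(z̄) ≥ 0`, `H(z̲) ≤ 0`, and hence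
`F₁(z̄) - F₁^{NL}(z̄) + F₁^{NL}(z̲) - F₁(z̲) ≥ 0`. -/
theorem proposition_two_key_inequality
    (f₁ w : ℝ → ℝ)
    (hw_nonneg : ∀ z, 0 ≤ w z)
    (hw_even : ∀ z, w (-z) = w z)
    (hw_zero : w 0 = 0)
    (hw_mono : MonotoneOn w (Ici (0:ℝ)))
    (hf_nonneg : ∀ z, 0 ≤ f₁ z)
    (hf_int : Integrable f₁)
    (hf_one : ∫ z, f₁ z = 1)
    (hwf_int : Integrable (fun z => w z * f₁ z))
    (K : ℝ) (hK : K = ∫ z, w z * f₁ z) (hKpos : 0 < K)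
    (g : ℝ → ℝ) (hg : ∀ z, g z = 1 - w z / K)
    (H : ℝ → ℝ) (hH : ∀ z, H z = ∫ x in Iic z, g x * f₁ x)
    (F₁ F₁NL : ℝ → ℝ)
    (hF₁ : ∀ z, F₁ z = ∫ x in Iic z, f₁ x)
    (hF₁NL : ∀ z, F₁NL z = ∫ x in Iic z, w x * f₁ x / K)
    (zl zu : ℝ) (hzlu : zl ≤ zu)
    (hS : {z : ℝ | w z ≤ K} ⊆ Icc zl zu) :
    0 ≤ H zu ∧ H zl ≤ 0 ∧ F₁ zu - F₁NL zu + F₁NL zl - F₁ zl ≥ 0 :=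
  proposition_two_key_inequality_general f₁ w hf_nonneg hf_int hf_one hwf_int K hK hKpos g hg H hH
    F₁ F₁NL hF₁ hF₁NL zl zu hS
end
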